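/- There exists a quantum logic L and an s-map p on L with elements a, b ∈ L such that p(a,b) = p(a,a)·p(b,b) but p(b,a) ≠ p(a,a)·p(b,b); i.e., independence with respect to an s-map is not symmetric. -/

import Mathlib

/-- A quantum logic: an orthomodular lattice. -/
class QuantumLogic (L : Type*) extends Lattice L, BoundedOrder L, Compl L where
  compl_compl : ∀ a : L, aᶜᶜ = a
  sup_compl : ∀ a : L, a ⊔ aᶜ = ⊤
  compl_le_compl : ∀ a b : L, a ≤ b → bᶜ ≤ aᶜ
  orthomodular : ∀ a b : L, a ≤ b → b = a ⊔ aᶜ ⊓ b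

section Defs
variable {L : Type*} [QuantumLogic L]

/-- Orthogonality: `a ⊥ b` iff `a ≤ bᶜ`. -/
def Orth (a b : L) : Prop := a ≤ bᶜ

/-- Compatibility: `a ↔ b` iff they decompose via mutually orthogonal elements. -/
def Compatible (a b : L) : Prop :=
  ∃ a₁ b₁ c : L, Orth a₁ b₁ ∧ Orth a₁ c ∧ Orth b₁ c ∧ a = a₁ ⊔ c ∧ b = b₁ ⊔ c

/-- An s-map on a quantum logic. -/
structure IsSMap (p : L → L → ℝ) : Prop where
  nonneg : ∀ a b, 0 ≤ p a b
  le_one : ∀ a b, p a b ≤ 1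
  top_top : p ⊤ ⊤ = 1
  orth_zero : ∀ a b, Orth a b → p a b = 0
  add_left : ∀ a b c, Orth a b → p (a ⊔ b) c = p a c + p b c
  add_right : ∀ a b c, Orth a b → p c (a ⊔ b) = p c a + p c b

/-- A conditional system in `L`. -/
def IsCondSystem (Lc : Set L) : Prop :=
  (⊥ : L) ∉ Lc ∧ (∀ a ∈ Lc, ∀ b ∈ Lc, a ⊔ b ∈ Lc) ∧
    ∀ a ∈ Lc, ∀ b ∈ Lc, a < b → aᶜ ⊓ b ∈ Lc

/-- A conditional state `f : L × L_c → [0,1]`. -/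
structure IsConditionalState (Lc : Set L) (f : L → L → ℝ) : Prop where
  nonneg : ∀ a b, b ∈ Lc → 0 ≤ f a b
  le_one : ∀ a b, b ∈ Lc → f a b ≤ 1
  state_bot : ∀ a ∈ Lc, f ⊥ a = 0
  state_top : ∀ a ∈ Lc, f ⊤ a = 1
  state_add : ∀ a ∈ Lc, ∀ b c : L, Orth b c → f (b ⊔ c) a = f b a + f c a
  diag : ∀ a ∈ Lc, f a a = 1
  cond : ∀ s : Finset L, (↑s : Set L) ⊆ Lc →
    (∀ a ∈ s, ∀ b ∈ s, a ≠ b → Orth a b) → s.sup id ∈ Lc →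
    ∀ d : L, f d (s.sup id) = ∑ a ∈ s, f a (s.sup id) * f d a

/-- A finite-spectrum discrete observable, given by its family of atoms
(mutually orthogonal events whose join is `⊤`). -/
def IsFinObs {n : ℕ} (e : Fin n → L) : Prop :=
  (∀ i j, i ≠ j → Orth (e i) (e j)) ∧ Finset.univ.sup e = ⊤

/-- Expectation `ν(x)` of a finite-spectrum observable with values `v` and events `e`
in the state `ν(b) = p(b,b)`. -/
noncomputable def nuObs (p : L → L → ℝ) {n : ℕ} (v : Fin n → ℝ) (e : Fin n → L) : ℝ :=
  ∑ i, v i * p (e i) (e i)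

/-- First joint moment `p(x,y)` of two finite-spectrum observables. -/
noncomputable def jointMoment (p : L → L → ℝ) {n m : ℕ} (xv : Fin n → ℝ) (xe : Fin n → L)
    (yv : Fin m → ℝ) (ye : Fin m → L) : ℝ :=
  ∑ i, ∑ j, xv i * yv j * p (xe i) (ye j)

/-- Covariance `c(x,y) = p(x,y) - ν(x)ν(y)`. -/
noncomputable def covObs (p : L → L → ℝ) {n m : ℕ} (xv : Fin n → ℝ) (xe : Fin n → L)
    (yv : Fin m → ℝ) (ye : Fin m → L) : ℝ :=
  jointMoment p xv xe yv ye - nuObs p xv xe * nuObs p yv ye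

end Defs

namespace SMapCounterexample

inductive L6 : Type
  | o | A | A' | B | B' | t
deriving DecidableEq

instance : Fintype L6 := ⟨{L6.o, L6.A, L6.A', L6.B, L6.B', L6.t}, fun x => by cases x <;> decide⟩

namespace L6

def leB : L6 → L6 → Bool
  | o, _ => true
  | _, t => true
  | x, y => x = y

instance : LE L6 := ⟨fun x y => leB x y = true⟩
instance : DecidableRel (· ≤ · : L6 → L6 → Prop) := fun x y => inferInstanceAs (Decidable (_ = true))

def supF (x y : L6) : L6 := if leB x y then y else if leB y x then x else t
def infF (x y : L6) : L6 := if leB x y then x else if leB y x then y else o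

instance : Lattice L6 where
  le := (· ≤ ·)
  le_refl := by decide
  le_trans := by decide
  le_antisymm := by decide
  sup := supF
  le_sup_left := by decide
  le_sup_right := by decide
  sup_le := by decide
  inf := infF
  inf_le_left := by decide
  inf_le_right := by decide
  le_inf := by decide

instance : BoundedOrder L6 where
  top := t
  bot := o
  le_top := by decide
  bot_le := by decide

def complF : L6 → L6
  | o => t | t => o | A => A' | A' => A | B => B' | B' => B

instance : Compl L6 := ⟨complF⟩

instance : QuantumLogic L6 where
  compl_compl := by decide
  sup_compl := by decide
  compl_le_compl := by decide
  orthomodular := by decide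

def q : L6 → L6 → ℤ
  | o, _ => 0
  | _, o => 0
  | t, y => q0 y
  | x, t => q0 x
  | A, A => 40 | A, A' => 0 | A, B => 12 | A, B' => 28
  | A', A => 0 | A', A' => 60 | A', B => 18 | A', B' => 42
  | B, A => 8 | B, A' => 22 | B, B => 30 | B, B' => 0
  | B', A => 32 | B', A' => 38 | B', B => 0 | B', B' => 70
where q0 : L6 → ℤ
  | o => 0 | A => 40 | A' => 60 | B => 30 | B' => 70 | t => 100

noncomputable def p (x y : L6) : ℝ := (q x y : ℝ) / 100

end L6

end SMapCounterexample

/-- independence with respect to an s-map is not symmetric. -/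
theorem smap_indep_not_symmetric :
    ∃ (L : Type) (inst : QuantumLogic L) (p : L → L → ℝ) (a b : L),
      @IsSMap L inst p ∧ p a b = p a a * p b b ∧ p b a ≠ p a a * p b b := by
  open SMapCounterexample SMapCounterexample.L6 in
  refine ⟨L6, inferInstance, p, A, B, ⟨?_, ?_, ?_, ?_, ?_, ?_⟩, ?_, ?_⟩
  · intro a b
    have h : (0:ℤ) ≤ q a b := by revert a b; decide
    have : (0:ℝ) ≤ (q a b : ℝ) := by exact_mod_cast h
    unfold p; positivity
  · intro a b
    have h : q a b ≤ 100 := by revert a b; decide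
    unfold p
    rw [div_le_one (by norm_num)]
    exact_mod_cast h
  · show p t t = 1
    unfold p
    norm_num [q, q.q0]
  · intro a b hab
    have h : ∀ x y : L6, x ≤ yᶜ → q x y = 0 := by decide
    have h := h a b hab
    unfold p
    rw [h]; norm_num
  · intro a b c hab
    have h : ∀ x y z : L6, x ≤ yᶜ → q (x ⊔ y) z = q x z + q y z := by decide
    have h := h a b c hab
    unfold p
    rw [h]; push_cast; ring
  · intro a b c hab
    have h : ∀ x y z : L6, x ≤ yᶜ → q z (x ⊔ y) = q z x + q z y := by decide
    have h := h a b c hab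
    unfold p
    rw [h]; push_cast; ring
  · unfold p; norm_num [q]
  · unfold p; norm_num [q]
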